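/- arXiv:1510.01832 — 3 statements merged into one kernel-verified Lean document; each statement's English description precedes it below -/
import Mathlib

section
/- Fix c ∈ ℝ, a > 1 and b > 0, and let W^{a,b} = {(x,y) ∈ ℝ² : |x| ∈ (1,a), |y| < b|x|/2}. Then W^{a,b} is multiplicatively tiling with respect to the set {(A_{a^k} S_{mb})^{-T} : k, m ∈ ℤ}, where A_a = [[a,0],[0,a^c]] and S_m = [[1,m],[0,1]]: for almost every ξ ∈ ℝ², ∑_{k∈ℤ} ∑_{m∈ℤ} 𝟙_{(A_{a^k} S_{mb})^{-T} W^{a,b}}(ξ) = 1. -/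
/-! A point `ξ` lies in the tile `(A_{a^k} S_{mb})^{-T} W^{a,b}` iff `(A_{a^k} S_{mb})^T ξ ∈ W^{a,b}`,
that is, iff `a^k |ξ₀| ∈ (1, a)` and `|a^{k(c-1)} ξ₁ / (b ξ₀) + m| < 1/2`. Away from the vertical
lines `ξ₀ = 0, ±a^n` the first condition singles out one scale `k`, and away from the countably
many lines through the origin on which the shear offset `a^{k(c-1)} ξ₁ / (b ξ₀)` is a
half-integer the second condition then singles out one shear `m`. -/

open Matrix Set MeasureTheory
open scoped ENNReal

noncomputable section

/-- The shearing matrix `S_m = [[1, m], [0, 1]]`. -/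
def Sm (m : ℝ) : Matrix (Fin 2) (Fin 2) ℝ := !![1, m; 0, 1]

/-- The (anisotropic) scaling matrix `A_a = [[a, 0], [0, a^c]]`. -/
def Aa (c a : ℝ) : Matrix (Fin 2) (Fin 2) ℝ := !![a, 0; 0, a ^ c]

/-- The set `W^{a,b} = {(x,y) ∈ ℝ² : |x| ∈ (1,a), |y| < b|x|/2}`. -/
def Wab (a b : ℝ) : Set (Fin 2 → ℝ) :=
  {v | |v 0| ∈ Set.Ioo 1 a ∧ |v 1| < b * |v 0| / 2}

theorem existsUnique_add_zsmul_mem_Ioo {G : Type*} [AddCommGroup G] [LinearOrder G]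
    [IsOrderedAddMonoid G] [Archimedean G] {p : G} (hp : 0 < p) {b c : G}
    (h : ∀ n : ℤ, b + n • p ≠ c) : ∃! m : ℤ, b + m • p ∈ Ioo c (c + p) :=
  (existsUnique_congr fun m => ⟨fun hm => ⟨(hm.1.lt_of_ne' (h m)), hm.2⟩,
    fun hm => ⟨hm.1.le, hm.2⟩⟩).1 (existsUnique_add_zsmul_mem_Ico hp b c)

theorem existsUnique_zpow_mul_mem_Ioo {a x : ℝ} (ha : 1 < a) (hx : 0 < x)
    (h : ∀ n : ℤ, x ≠ a ^ n) : ∃! k : ℤ, a ^ k * x ∈ Ioo 1 a := by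
  have ha0 : 0 < a := one_pos.trans ha
  have hlog (k : ℤ) : Real.log (a ^ k * x) = Real.log x + k • Real.log a := by
    rw [Real.log_mul (zpow_pos ha0 k).ne' hx.ne', Real.log_zpow, zsmul_eq_mul, add_comm]
  have hmem (k : ℤ) :
      a ^ k * x ∈ Ioo 1 a ↔ Real.log x + k • Real.log a ∈ Ioo 0 (0 + Real.log a) := by
    rw [zero_add, ← Real.log_one, ← hlog, mem_Ioo, mem_Ioo,
      Real.log_lt_log_iff one_pos (by positivity), Real.log_lt_log_iff (by positivity) ha0]
  refine (existsUnique_congr hmem).2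
    (existsUnique_add_zsmul_mem_Ioo (Real.log_pos ha) fun n hn => h (-n) ?_)
  refine Real.log_injOn_pos hx (zpow_pos ha0 (-n)) ?_
  rw [Real.log_zpow, zsmul_eq_mul] at *
  push_cast
  linarith

theorem existsUnique_abs_add_intCast_lt_half {s : ℝ} (h : ∀ n : ℤ, s + n ≠ -(1 / 2)) :
    ∃! m : ℤ, |s + m| < 1 / 2 := by
  refine (existsUnique_congr fun m => ?_).1
    (existsUnique_add_zsmul_mem_Ioo one_pos (b := s) (c := -(1 / 2)) (by simpa using h))
  rw [zsmul_one, abs_lt, mem_Ioo]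
  norm_num

theorem Matrix.mem_image_mulVec_inv_transpose_iff {n R : Type*} [Fintype n] [DecidableEq n]
    [CommRing R] {M : Matrix n n R} (hM : IsUnit M.det) {W : Set (n → R)} {ξ : n → R} :
    ξ ∈ (M⁻¹)ᵀ.mulVec '' W ↔ Mᵀ.mulVec ξ ∈ W := by
  constructor
  · rintro ⟨w, hw, rfl⟩
    rwa [mulVec_mulVec, ← transpose_mul, nonsing_inv_mul _ hM, transpose_one, one_mulVec]
  · exact fun h => ⟨_, h, by
      rw [mulVec_mulVec, ← transpose_mul, mul_nonsing_inv _ hM, transpose_one, one_mulVec]⟩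

theorem isUnit_det_Aa_mul_Sm {c t : ℝ} (ht : 0 < t) (s : ℝ) : IsUnit (Aa c t * Sm s).det := by
  simp only [det_mul, Aa, Sm, det_fin_two_of, mul_zero, sub_zero, mul_one]
  exact (by positivity : (0 : ℝ) < t * t ^ c).ne'.isUnit

theorem transpose_Aa_mul_Sm_mulVec (c t s : ℝ) (ξ : Fin 2 → ℝ) :
    (Aa c t * Sm s)ᵀ *ᵥ ξ = ![t * ξ 0, t * s * ξ 0 + t ^ c * ξ 1] := by
  ext i
  fin_cases i <;> simp [Aa, Sm, mulVec, dotProduct, Fin.sum_univ_two]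

theorem mem_image_Aa_mul_Sm_Wab_iff {a b c t : ℝ} (hb : 0 < b) (ht : 0 < t) {ξ : Fin 2 → ℝ}
    (hξ : ξ 0 ≠ 0) (m : ℝ) :
    ξ ∈ ((Aa c t * Sm (m * b))⁻¹)ᵀ.mulVec '' Wab a b ↔
      t * |ξ 0| ∈ Ioo 1 a ∧ |t ^ (c - 1) * ξ 1 / (b * ξ 0) + m| < 1 / 2 := by
  have hscale : t * (m * b) * ξ 0 + t ^ c * ξ 1
      = (t * b * ξ 0) * (t ^ (c - 1) * ξ 1 / (b * ξ 0) + m) := by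
    rw [Real.rpow_sub_one ht.ne']
    field_simp
    ring
  have hpos : 0 < t * b * |ξ 0| := by positivity
  rw [mem_image_mulVec_inv_transpose_iff (isUnit_det_Aa_mul_Sm ht _),
    transpose_Aa_mul_Sm_mulVec, Wab, mem_ofPred_eq]
  simp only [cons_val_zero, cons_val_one, abs_mul, abs_of_pos ht, hscale, abs_of_pos hb]
  rw [show b * (t * |ξ 0|) / 2 = t * b * |ξ 0| * (1 / 2) by ring, mul_lt_mul_iff_right₀ hpos]

theorem tsum_tsum_indicator_one_eq_one {α β X : Type*} {s : α → β → Set X} {x : X} {i₀ : α}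
    {j₀ : β} (h : ∀ i j, x ∈ s i j ↔ i = i₀ ∧ j = j₀) :
    ∑' i, ∑' j, (s i j).indicator (fun _ => (1 : ℝ≥0∞)) x = 1 := by
  classical
  simp only [indicator_apply, h, ite_and]
  rw [tsum_eq_single i₀ fun i hi => by simp [hi]]
  simp

theorem ae_apply_notMem {ι : Type*} [Fintype ι] (i : ι) {S : Set ℝ} (hS : S.Countable) :
    ∀ᵐ ξ : ι → ℝ, ξ i ∉ S := by
  rw [volume_pi]
  exact (Measure.tendsto_eval_ae_ae (μ := fun _ : ι => (volume : Measure ℝ)) (i := i)).eventually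
    (hS.ae_notMem volume)

theorem ae_apply_one_ne_mul_apply_zero (r : ℝ) : ∀ᵐ ξ : Fin 2 → ℝ, ξ 1 ≠ r * ξ 0 := by
  let f : (Fin 2 → ℝ) →ₗ[ℝ] ℝ := LinearMap.proj 1 - r • LinearMap.proj 0
  have hker : LinearMap.ker f ≠ ⊤ := fun htop => by
    simpa [f] using LinearMap.congr_fun (LinearMap.ker_eq_top.1 htop) (Pi.single 1 1)
  rw [ae_iff]
  convert Measure.addHaar_submodule volume _ hker using 2
  ext ξ
  simp [f, sub_eq_zero]

theorem ae_apply_ne_zero_and_abs_apply_ne_zpow {ι : Type*} [Fintype ι] (i : ι) (a : ℝ) :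
    ∀ᵐ ξ : ι → ℝ, ξ i ≠ 0 ∧ ∀ n : ℤ, |ξ i| ≠ a ^ n := by
  have hS : (insert 0 (range (a ^ · : ℤ → ℝ) ∪ range (-a ^ · : ℤ → ℝ))).Countable :=
    ((countable_range _).union (countable_range _)).insert 0
  filter_upwards [ae_apply_notMem i hS] with ξ hξ
  simp only [mem_insert_iff, mem_union, mem_range, not_or, not_exists] at hξ
  refine ⟨hξ.1, fun n hn => ?_⟩
  rcases (abs_eq (hn ▸ abs_nonneg (ξ i))).1 hn with h | h
  · exact hξ.2.1 n h.symm
  · exact hξ.2.2 n h.symm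

/-- The set `W^{a,b}` is multiplicatively tiling with respect
to `{(A_{aᵏ} S_{mb})^{-T} : k, m ∈ ℤ}`: for almost every `ξ ∈ ℝ²`,
`∑ₖ ∑ₘ 𝟙_{(A_{aᵏ} S_{mb})^{-T} W^{a,b}}(ξ) = 1`. -/
theorem statement_10 (c a b : ℝ) (ha : 1 < a) (hb : 0 < b) :
    ∀ᵐ (ξ : Fin 2 → ℝ) ∂volume,
      (∑' k : ℤ, ∑' m : ℤ,
        ((((Aa c (a ^ k) * Sm ((m : ℝ) * b))⁻¹)ᵀ.mulVec '' Wab a b).indicator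
          (fun _ => (1 : ℝ≥0∞)) ξ)) = 1 := by
  have ha0 : 0 < a := one_pos.trans ha
  filter_upwards [ae_apply_ne_zero_and_abs_apply_ne_zpow 0 a,
    -- the lines on which the shear offset at scale `a ^ k` equals `-1/2 - n`
    ae_all_iff.2 fun k : ℤ => ae_all_iff.2 fun n : ℤ =>
      ae_apply_one_ne_mul_apply_zero ((-(1 / 2) - n) * b / (a ^ k) ^ (c - 1))]
    with ξ ⟨hξ0, hξpow⟩ hξline
  obtain ⟨k₀, hk₀, hk_unique⟩ := existsUnique_zpow_mul_mem_Ioo ha (abs_pos.2 hξ0) hξpow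
  obtain ⟨m₀, hm₀, hm_unique⟩ := existsUnique_abs_add_intCast_lt_half
    (s := (a ^ k₀) ^ (c - 1) * ξ 1 / (b * ξ 0)) fun n hn => hξline k₀ n <| by
      have hscale_pos : 0 < (a ^ k₀) ^ (c - 1) := by positivity
      field_simp at hn ⊢
      linarith
  refine tsum_tsum_indicator_one_eq_one (i₀ := k₀) (j₀ := m₀) fun k m => ?_
  rw [mem_image_Aa_mul_Sm_Wab_iff hb (zpow_pos ha0 k) hξ0]
  constructor
  · rintro ⟨hk, hm⟩
    obtain rfl := hk_unique k hk
    exact ⟨rfl, hm_unique m hm⟩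
  · rintro ⟨rfl, rfl⟩
    exact ⟨hk₀, hm₀⟩
end
end

section
/- Let a ∈ ℕ with a ≥ 2, let n ∈ ℕ be even with n > 2, and set b = tan(π/n). Let V = V^{a,n} = {(x,y) ∈ ℝ² : |y| ∈ (1,a], |x| ≤ tan(π/n)|y|}. Then V is translationally k-tiling with k = 2(a−1) with respect to the lattice Γ = b(a+1)ℤ × ℤ: for almost every ξ ∈ ℝ², ∑_{γ∈Γ} 𝟙_{γ+V}(ξ) = 2(a−1). -/
/-!
Group the translates `γ + V`, `γ = (k L, m)`, by their second coordinate `m`, where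
`L = b (a + 1)`. For `y ∉ ℤ`, the heights `t = |y - m|` lying in `(1, a]` come in exactly `a - 1`
pairs `{t, a + 1 - t}` (pair `m` below `y` with `m + a + 1` above it). At height `t` the row of `V`
is the segment `|x| ≤ b t`, so the two rows of a pair have half-widths `u` and `L - u`. Two centred
segments of lengths `2u` and `2(L - u)` together contain exactly two points of a generic translate
of `Lℤ`, so each pair contributes `2`. The non-generic points lie on countably many lines.
-/

open MeasureTheory Set
open scoped ENNReal

noncomputable section

/-- The set `V^{a,n} = {(x,y) ∈ ℝ² : |y| ∈ (1,a], |x| ≤ tan(π/n)|y|}`. -/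
def Van (a n : ℕ) : Set (ℝ × ℝ) :=
  {p | |p.2| ∈ Set.Ioc 1 (a : ℝ) ∧ |p.1| ≤ Real.tan (Real.pi / n) * |p.2|}

section LatticeCount

variable {L x u : ℝ}

lemma abs_sub_intCast_mul_le_iff (hL : 0 < L) (hx : ∀ k : ℤ, x - u ≠ k * L) (k : ℤ) :
    |x - k * L| ≤ u ↔ k ∈ Finset.Icc (⌊(x - u) / L⌋ + 1) ⌊(x + u) / L⌋ := by
  rw [Finset.mem_Icc, Int.add_one_le_iff, Int.floor_lt, Int.le_floor, div_lt_iff₀ hL,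
    le_div_iff₀ hL, abs_le, ← (hx k).le_iff_lt]
  constructor <;> rintro ⟨h₁, h₂⟩ <;> constructor <;> linarith

lemma tsum_ite_abs_sub_intCast_mul_le (hL : 0 < L) (hx : ∀ k : ℤ, x - u ≠ k * L) :
    (∑' k : ℤ, if |x - k * L| ≤ u then (1 : ℝ≥0∞) else 0) =
      ((⌊(x + u) / L⌋ - ⌊(x - u) / L⌋).toNat : ℝ≥0∞) := by
  simp_rw [abs_sub_intCast_mul_le_iff hL hx]
  rw [tsum_eq_sum (fun k hk => if_neg hk), Finset.sum_ite_mem, Finset.inter_self,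
    Finset.sum_const, Int.card_Icc, nsmul_one]
  congr 2
  ring

lemma tsum_ite_abs_sub_intCast_mul_le_add_eq_two (hL : 0 < L) (hu : u ∈ Icc 0 L)
    (h₁ : ∀ k : ℤ, x - u ≠ k * L) (h₂ : ∀ k : ℤ, x + u ≠ k * L) :
    (∑' k : ℤ, if |x - k * L| ≤ u then (1 : ℝ≥0∞) else 0) +
      ∑' k : ℤ, (if |x - k * L| ≤ L - u then 1 else 0) = 2 := by
  have h₂' : ∀ k : ℤ, x - (L - u) ≠ k * L := fun k h => h₂ (k + 1) (by push_cast; linarith)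
  rw [tsum_ite_abs_sub_intCast_mul_le hL h₁, tsum_ite_abs_sub_intCast_mul_le hL h₂',
    show (x + (L - u)) / L = (x - u) / L + 1 by field_simp; ring,
    show (x - (L - u)) / L = (x + u) / L - 1 by field_simp; ring,
    Int.floor_add_one, Int.floor_sub_one]
  have hle : ⌊(x - u) / L⌋ ≤ ⌊(x + u) / L⌋ := Int.floor_mono (by gcongr; linarith [hu.1])
  have hle₂ : ⌊(x + u) / L⌋ ≤ ⌊(x - u) / L⌋ + 2 := by
    have : (x + u) / L ≤ (x - u) / L + (2 : ℕ) := by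
      rw [div_add' _ _ _ hL.ne']
      exact div_le_div_of_nonneg_right (by push_cast; linarith [hu.2]) hL.le
    simpa using Int.floor_mono this
  norm_cast
  omega

end LatticeCount

lemma mem_Ico_ceil_sub_iff {y s t : ℝ} {m : ℤ} :
    m ∈ Finset.Ico ⌈y - t⌉ ⌈y - s⌉ ↔ y - m ∈ Ioc s t := by
  rw [Finset.mem_Ico, Int.ceil_le, Int.lt_ceil, mem_Ioc]
  constructor <;> rintro ⟨h₁, h₂⟩ <;> constructor <;> linarith

lemma ite_abs_mem_Ioc {M : Type*} [AddZeroClass M] {s t : ℝ} (hs : 0 ≤ s) (h : ℝ → M) (r : ℝ) :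
    (if |r| ∈ Ioc s t then h |r| else 0) =
      (if r ∈ Ioc s t then h r else 0) + if -r ∈ Ioc s t then h (-r) else 0 := by
  rcases le_or_gt 0 r with hr | hr
  · have : -r ∉ Ioc s t := fun h => by linarith [h.1]
    rw [abs_of_nonneg hr, if_neg this, add_zero]
  · have : r ∉ Ioc s t := fun h => by linarith [h.1]
    rw [abs_of_neg hr, if_neg this, zero_add]

lemma tsum_ite_abs_sub_intCast_mem_Ioc (a : ℕ) {y : ℝ} (hy : ∀ m : ℤ, y ≠ m) (h : ℝ → ℝ≥0∞) :
    ∑' m : ℤ, (if |y - m| ∈ Ioc 1 (a : ℝ) then h |y - m| else 0) =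
      ∑ m ∈ Finset.Ico ⌈y - a⌉ ⌈y - 1⌉, (h (y - m) + h (a + 1 - (y - m))) := by
  have hshift : ∀ m : ℤ, -(y - ↑(m + (a + 1 : ℤ))) ∈ Ioc 1 (a : ℝ) ↔ y - m ∈ Ioc 1 (a : ℝ) := by
    intro m
    have h₁ := hy (m + 1)
    have h₂ := hy (m + a)
    push_cast at h₁ h₂ ⊢
    simp only [mem_Ioc]
    constructor <;> rintro ⟨h₃, h₄⟩
    · exact ⟨lt_of_le_of_ne (by linarith) fun h => h₁ (by linarith), by linarith⟩
    · exact ⟨by linarith [lt_of_le_of_ne h₄ fun h => h₂ (by linarith)], by linarith⟩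
  simp_rw [ite_abs_mem_Ioc zero_le_one]
  have hreflect : ∑' m : ℤ, (if -(y - m) ∈ Ioc 1 (a : ℝ) then h (-(y - m)) else 0) =
      ∑' m : ℤ, if y - m ∈ Ioc 1 (a : ℝ) then h (a + 1 - (y - m)) else 0 := by
    rw [← (Equiv.addRight ((a : ℤ) + 1)).tsum_eq]
    refine tsum_congr fun m => ?_
    simp only [Equiv.coe_addRight, hshift]
    push_cast
    congr 2
    ring
  rw [ENNReal.tsum_add, hreflect, ← ENNReal.tsum_add,
    tsum_eq_sum (s := Finset.Ico ⌈y - a⌉ ⌈y - 1⌉)]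
  · refine Finset.sum_congr rfl fun m hm => ?_
    rw [if_pos (mem_Ico_ceil_sub_iff.1 hm), if_pos (mem_Ico_ceil_sub_iff.1 hm)]
  · intro m hm
    rw [mem_Ico_ceil_sub_iff] at hm
    rw [if_neg hm, if_neg hm, add_zero]

lemma ae_add_mul_snd_notMem {S : Set ℝ} (hS : S.Countable) (c : ℝ) :
    ∀ᵐ p : ℝ × ℝ, p.1 + c * p.2 ∉ S := by
  have hmeas : MeasurableSet {p : ℝ × ℝ | p.1 + c * p.2 ∉ S} :=
    (hS.measurableSet.preimage (by fun_prop)).compl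
  rw [Measure.volume_eq_prod, Measure.ae_prod_iff_ae_ae hmeas, Measure.ae_ae_comm hmeas]
  refine .of_forall fun y => ?_
  filter_upwards [measure_eq_zero_iff_ae_notMem.1
    ((hS.preimage (add_left_injective (c * y))).measure_zero volume)] with x hx using hx

lemma ae_snd_notMem {S : Set ℝ} (hS : S.Countable) : ∀ᵐ p : ℝ × ℝ, p.2 ∉ S := by
  rw [Measure.volume_eq_prod]
  exact Measure.quasiMeasurePreserving_snd.ae
    (measure_eq_zero_iff_ae_notMem.1 (hS.measure_zero _))

def doubleTrapezoid (a : ℕ) (b : ℝ) : Set (ℝ × ℝ) :=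
  {p | |p.2| ∈ Ioc 1 (a : ℝ) ∧ |p.1| ≤ b * |p.2|}

lemma indicator_doubleTrapezoid_sub (a : ℕ) (b x y : ℝ) (k m : ℤ) (L : ℝ) :
    (doubleTrapezoid a b).indicator (fun _ => (1 : ℝ≥0∞)) ((x, y) - ((k : ℝ) * L, (m : ℝ))) =
      (if |y - m| ∈ Ioc 1 (a : ℝ) then 1 else 0) *
        if |x - k * L| ≤ b * |y - m| then 1 else 0 := by
  simp only [indicator_apply, doubleTrapezoid, mem_ofPred_eq, Prod.mk_sub_mk]
  split_ifs <;> simp_all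

theorem tsum_indicator_doubleTrapezoid_sub {a : ℕ} {b : ℝ} (hb : 0 < b) {p : ℝ × ℝ}
    (hy : ∀ m : ℤ, p.2 ≠ m)
    (hx₁ : ∀ k m : ℤ, p.1 + b * p.2 ≠ k * (b * (a + 1)) + m * b)
    (hx₂ : ∀ k m : ℤ, p.1 + -b * p.2 ≠ k * (b * (a + 1)) + m * b) :
    ∑' z : ℤ × ℤ, (doubleTrapezoid a b).indicator (fun _ => (1 : ℝ≥0∞))
        (p - ((z.1 : ℝ) * (b * ((a : ℝ) + 1)), (z.2 : ℝ))) = (2 * (a - 1) : ℕ) := by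
  obtain ⟨x, y⟩ := p
  set L := b * ((a : ℝ) + 1)
  rw [ENNReal.tsum_prod', ENNReal.tsum_comm]
  simp_rw [indicator_doubleTrapezoid_sub, ENNReal.tsum_mul_left, ite_mul, one_mul, zero_mul]
  rw [tsum_ite_abs_sub_intCast_mem_Ioc a hy
    (fun t => ∑' k : ℤ, if |x - k * L| ≤ b * t then 1 else 0)]
  have hpair : ∀ m ∈ Finset.Ico ⌈y - a⌉ ⌈y - 1⌉,
      ((∑' k : ℤ, if |x - k * L| ≤ b * (y - m) then (1 : ℝ≥0∞) else 0) +
        ∑' k : ℤ, if |x - k * L| ≤ b * (a + 1 - (y - m)) then 1 else 0) = 2 := by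
    intro m hm
    obtain ⟨h₁, h₂⟩ := mem_Ico_ceil_sub_iff.1 hm
    rw [show b * (a + 1 - (y - m)) = L - b * (y - m) by ring]
    refine tsum_ite_abs_sub_intCast_mul_le_add_eq_two (by positivity)
      ⟨by nlinarith, by nlinarith⟩ (fun k h => hx₂ k (-m) ?_) (fun k h => hx₁ k m ?_)
    · push_cast; linarith
    · linarith
  rw [Finset.sum_congr rfl hpair, Finset.sum_const, Int.card_Ico, Int.ceil_sub_one,
    Int.ceil_sub_natCast, nsmul_eq_mul,
    show (⌈y⌉ - 1 - (⌈y⌉ - a)).toNat = a - 1 by omega]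
  push_cast
  ring

theorem statement_14_general (a n : ℕ) (hn2 : 2 < n) :
    ∀ᵐ p : ℝ × ℝ ∂volume,
      (∑' z : ℤ × ℤ, (Van a n).indicator (fun _ => (1 : ℝ≥0∞))
        (p - ((z.1 : ℝ) * (Real.tan (Real.pi / n) * ((a : ℝ) + 1)), (z.2 : ℝ)))) =
      (2 * (a - 1) : ℕ) := by
  set b := Real.tan (Real.pi / n)
  have hb : 0 < b := Real.tan_pos_of_pos_of_lt_pi_div_two (by positivity)
    (div_lt_div_of_pos_left Real.pi_pos two_pos (by exact_mod_cast hn2))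
  have hS : (range fun z : ℤ × ℤ => (z.1 : ℝ) * (b * (a + 1)) + z.2 * b).Countable :=
    countable_range _
  filter_upwards [ae_snd_notMem (countable_range ((↑) : ℤ → ℝ)),
    ae_add_mul_snd_notMem hS b, ae_add_mul_snd_notMem hS (-b)] with p hy hx₁ hx₂
  exact tsum_indicator_doubleTrapezoid_sub hb (fun m h => hy ⟨m, h.symm⟩)
    (fun k m h => hx₁ ⟨(k, m), h.symm⟩) (fun k m h => hx₂ ⟨(k, m), h.symm⟩)

/-- For `a ∈ ℕ`, `a ≥ 2`, and even `n > 2`, the set `V^{a,n}`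
is translationally `k`-tiling with `k = 2(a-1)` with respect to the lattice
`Γ = b(a+1)ℤ × ℤ`, where `b = tan(π/n)`. -/
theorem statement_14 (a n : ℕ) (ha : 2 ≤ a) (hn : Even n) (hn2 : 2 < n) :
    ∀ᵐ p : ℝ × ℝ ∂volume,
      (∑' z : ℤ × ℤ, (Van a n).indicator (fun _ => (1 : ℝ≥0∞))
        (p - ((z.1 : ℝ) * (Real.tan (Real.pi / n) * ((a : ℝ) + 1)), (z.2 : ℝ)))) =
      (2 * (a - 1) : ℕ) :=
  statement_14_general a n hn2
end
end

section
/- Let a ∈ ℕ with a ≥ 2, let n ∈ ℕ be even with n > 2, set b = tan(π/n), and let V = {(x,y) ∈ ℝ² : |y| ∈ (1,a], |x| ≤ b|y|}, with the pieces V_{+,1} = {(x,y) ∈ V : y > 0, |x| ≤ b}, V_{+,2} = {(x,y) ∈ V : y > 0, x < −b}, V_{+,3} = {(x,y) ∈ V : y > 0, x > b}, and V_{−,i} = −V_{+,i} for i = 1,2,3. Then, up to sets of Lebesgue measure zero, the six translated sets V_{+,1} + (0,−1), V_{−,1} + (0,1), V_{+,2} + (0,−1), V_{−,2} + (−b(a+1),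 a), V_{+,3} + (−b(a+1), −a), V_{−,3} + (0,1) are pairwise disjoint and their union equals the rectangle [−ba, b] × [−(a−1), a−1]. -/
open MeasureTheory Set
open scoped symmDiff

noncomputable section

/-- `V_{+,1} = {(x,y) ∈ V : y > 0, |x| ≤ b}`. -/
def Vp1 (a n : ℕ) : Set (ℝ × ℝ) :=
  {p ∈ Van a n | 0 < p.2 ∧ |p.1| ≤ Real.tan (Real.pi / n)}

/-- `V_{+,2} = {(x,y) ∈ V : y > 0, x < -b}`. -/
def Vp2 (a n : ℕ) : Set (ℝ × ℝ) :=
  {p ∈ Van a n | 0 < p.2 ∧ p.1 < -Real.tan (Real.pi / n)}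

/-- `V_{+,3} = {(x,y) ∈ V : y > 0, x > b}`. -/
def Vp3 (a n : ℕ) : Set (ℝ × ℝ) :=
  {p ∈ Van a n | 0 < p.2 ∧ Real.tan (Real.pi / n) < p.1}

/-- The six translated pieces of `V` used in the shift-and-merge procedure. -/
def vpieces (a n : ℕ) : Fin 6 → Set (ℝ × ℝ) :=
  ![(fun p => p + ((0 : ℝ), (-1 : ℝ))) '' Vp1 a n,
    (fun p => p + ((0 : ℝ), (1 : ℝ))) '' (-Vp1 a n),
    (fun p => p + ((0 : ℝ), (-1 : ℝ))) '' Vp2 a n,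
    (fun p => p + (-(Real.tan (Real.pi / n) * ((a : ℝ) + 1)), (a : ℝ))) '' (-Vp2 a n),
    (fun p => p + (-(Real.tan (Real.pi / n) * ((a : ℝ) + 1)), -(a : ℝ))) '' Vp3 a n,
    (fun p => p + ((0 : ℝ), (1 : ℝ))) '' (-Vp3 a n)]

open Real

/-!
For `y > 0` the three pieces of `V` are the trapezoids `1 < y ≤ a` cut by `|x| ≤ b`,
`-b y ≤ x < -b` and `b < x ≤ b y`. After the translations the six pieces become explicit
polygons with edges on finitely many lines: two of them can only meet on one of these lines, and
off them the polygons cover the rectangle. Lines in the plane are Lebesgue-null.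
-/

-- `n = 2` is covered by the junk value `tan (π / 2) = 0`.
lemma tan_pi_div_natCast_nonneg (n : ℕ) : 0 ≤ tan (π / n) := by
  rcases n with _ | _ | n
  · simp
  · simp
  · refine tan_nonneg_of_nonneg_of_le_pi_div_two (by positivity) ?_
    exact div_le_div_of_nonneg_left pi_pos.le two_pos (by push_cast; linarith)

lemma volume_setOf_fst_add_mul_snd_eq (b c : ℝ) :
    volume {p : ℝ × ℝ | p.1 + b * p.2 = c} = 0 := by
  have hslice (y : ℝ) :
      (fun x => (x, y)) ⁻¹' {p : ℝ × ℝ | p.1 + b * p.2 = c} = {c - b * y} := by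
    ext x
    simp [eq_sub_iff_add_eq]
  rw [Measure.volume_eq_prod,
    Measure.prod_apply_symm (measurableSet_eq_fun (by fun_prop) (by fun_prop))]
  simp [hslice]

lemma volume_setOf_fst_eq (c : ℝ) : volume {p : ℝ × ℝ | p.1 = c} = 0 := by
  simpa using volume_setOf_fst_add_mul_snd_eq 0 c

lemma volume_setOf_snd_eq (c : ℝ) : volume {p : ℝ × ℝ | p.2 = c} = 0 := by
  rw [show {p : ℝ × ℝ | p.2 = c} = univ ×ˢ {c} by ext; simp, Measure.volume_eq_prod,
    Measure.prod_prod]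
  simp

def tile (b A : ℝ) : Fin 6 → Set (ℝ × ℝ) :=
  ![{p | 0 < p.2 ∧ p.2 ≤ A - 1 ∧ -b ≤ p.1 ∧ p.1 ≤ b},
    {p | -(A - 1) ≤ p.2 ∧ p.2 < 0 ∧ -b ≤ p.1 ∧ p.1 ≤ b},
    {p | 0 < p.2 ∧ p.2 ≤ A - 1 ∧ -(b * (p.2 + 1)) ≤ p.1 ∧ p.1 < -b},
    {p | 0 ≤ p.2 ∧ p.2 < A - 1 ∧ -(b * A) < p.1 ∧ p.1 ≤ -(b * (p.2 + 1))},
    {p | -(A - 1) < p.2 ∧ p.2 ≤ 0 ∧ -(b * A) < p.1 ∧ p.1 ≤ b * (p.2 - 1)},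
    {p | -(A - 1) ≤ p.2 ∧ p.2 < 0 ∧ b * (p.2 - 1) ≤ p.1 ∧ p.1 < -b}]

-- The left edge `x = -b A` is included because the tiles `3` and `4` are open there.
def tileSeams (b A : ℝ) : Set (ℝ × ℝ) :=
  {p | p.2 = 0} ∪ {p | p.1 = -b} ∪ {p | p.1 = -(b * A)} ∪ {p | p.1 + b * p.2 = -b} ∪
    {p | p.1 + -b * p.2 = -b}

lemma volume_tileSeams (b A : ℝ) : volume (tileSeams b A) = 0 := by
  simp only [tileSeams, measure_union_null_iff, volume_setOf_snd_eq, volume_setOf_fst_eq,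
    volume_setOf_fst_add_mul_snd_eq, and_self]

section
variable {b A : ℝ}

lemma tile_inter_subset_tileSeams (hb : 0 ≤ b) {i j : Fin 6} (hij : i ≠ j) :
    tile b A i ∩ tile b A j ⊆ tileSeams b A := by
  wlog hlt : i < j generalizing i j
  · rw [inter_comm]
    exact this hij.symm (lt_of_le_of_ne (not_lt.mp hlt) hij.symm)
  rintro p ⟨hi, hj⟩
  simp only [tileSeams, mem_union, mem_ofPred_eq]
  have hby : 0 ≤ p.2 → 0 ≤ b * p.2 := mul_nonneg hb
  have hby' : p.2 ≤ 0 → b * p.2 ≤ 0 := mul_nonpos_of_nonneg_of_nonpos hb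
  fin_cases i <;> fin_cases j <;> try simp at hlt
  all_goals
    simp only [tile, Fin.zero_eta, Fin.isValue, Matrix.cons_val_zero, mem_ofPred_eq,
      Fin.reduceFinMk, Matrix.cons_val] at hi hj
    obtain ⟨hi1, hi2, hi3, hi4⟩ := hi
    obtain ⟨hj1, hj2, hj3, hj4⟩ := hj
    rcases le_total 0 p.2 with hy | hy <;> [have := hby hy; have := hby' hy] <;>
    first
    | (left; left; left; left; linarith)
    | (left; left; left; right; linarith)
    | (left; right; linarith)
    | (right; linarith)

lemma tile_subset_Icc_prod_Icc (hb : 0 ≤ b) (i : Fin 6) :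
    tile b A i ⊆ Icc (-(b * A)) b ×ˢ Icc (-(A - 1)) (A - 1) := by
  rintro p hp
  fin_cases i
  all_goals
    simp only [tile, Fin.zero_eta, Fin.isValue, Matrix.cons_val_zero, mem_ofPred_eq,
      Fin.reduceFinMk, Matrix.cons_val] at hp
    obtain ⟨hy1, hy2, hx1, hx2⟩ := hp
    exact ⟨⟨by nlinarith, by nlinarith⟩, by linarith, by linarith⟩

lemma Icc_prod_Icc_diff_tileSeams_subset :
    Icc (-(b * A)) b ×ˢ Icc (-(A - 1)) (A - 1) \ tileSeams b A ⊆ ⋃ i, tile b A i := by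
  rintro p ⟨⟨⟨hx1, hx2⟩, hy1, hy2⟩, hp⟩
  simp only [tileSeams, mem_union, mem_ofPred_eq, not_or] at hp
  obtain ⟨⟨⟨⟨hy0, -⟩, hxA⟩, -⟩, -⟩ := hp
  have hx1 : -(b * A) < p.1 := lt_of_le_of_ne hx1 (Ne.symm hxA)
  simp only [mem_iUnion]
  rcases lt_or_gt_of_ne hy0 with hy | hy
  · rcases le_or_gt (-b) p.1 with hx | hx
    · exact ⟨1, ⟨hy1, hy, hx, hx2⟩⟩
    rcases le_or_gt (b * (p.2 - 1)) p.1 with hx' | hx'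
    · exact ⟨5, ⟨hy1, hy, hx', hx⟩⟩
    refine ⟨4, ⟨lt_of_le_of_ne hy1 ?_, hy.le, hx1, hx'.le⟩⟩
    intro hyA
    rw [← hyA] at hx'
    linarith
  · rcases le_or_gt (-b) p.1 with hx | hx
    · exact ⟨0, ⟨hy, hy2, hx, hx2⟩⟩
    rcases le_or_gt (-(b * (p.2 + 1))) p.1 with hx' | hx'
    · exact ⟨2, ⟨hy, hy2, hx', hx⟩⟩
    refine ⟨3, ⟨hy.le, lt_of_le_of_ne hy2 ?_, hx1, hx'.le⟩⟩
    intro hyA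
    rw [hyA] at hx'
    linarith

lemma tile_ae_partition (hb : 0 ≤ b) :
    (∀ i j : Fin 6, i ≠ j → volume (tile b A i ∩ tile b A j) = 0) ∧
    volume ((⋃ i, tile b A i) ∆ (Icc (-(b * A)) b ×ˢ Icc (-(A - 1)) (A - 1))) = 0 := by
  refine ⟨fun i j hij => measure_mono_null (tile_inter_subset_tileSeams hb hij)
    (volume_tileSeams b A), measure_mono_null ?_ (volume_tileSeams b A)⟩
  rw [symmDiff_def]
  refine union_subset
    (fun p hp => absurd (iUnion_subset (tile_subset_Icc_prod_Icc hb) hp.1) hp.2) (fun p hp => ?_)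
  by_contra hseam
  exact hp.2 (Icc_prod_Icc_diff_tileSeams_subset ⟨hp.1, hseam⟩)

end

section
variable {a n : ℕ}

lemma mem_Van_of_pos {p : ℝ × ℝ} (hy : 0 < p.2) :
    p ∈ Van a n ↔ 1 < p.2 ∧ p.2 ≤ a ∧ |p.1| ≤ tan (π / n) * p.2 := by
  simp only [Van, mem_ofPred_eq, mem_Ioc, abs_of_pos hy, and_assoc]

lemma Vp1_eq (hb : 0 ≤ tan (π / n)) : Vp1 a n =
    {p | 1 < p.2 ∧ p.2 ≤ (a : ℝ) ∧ -tan (π / n) ≤ p.1 ∧ p.1 ≤ tan (π / n)} := by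
  ext p
  simp only [Vp1, mem_ofPred_eq, ← abs_le]
  constructor
  · rintro ⟨hV, hy, hx⟩
    obtain ⟨hy1, hy2, -⟩ := (mem_Van_of_pos hy).mp hV
    exact ⟨hy1, hy2, hx⟩
  · rintro ⟨hy1, hy2, hx⟩
    have hy : 0 < p.2 := by linarith
    refine ⟨(mem_Van_of_pos hy).mpr ⟨hy1, hy2, ?_⟩, hy, hx⟩
    nlinarith

lemma Vp2_eq : Vp2 a n = {p | 1 < p.2 ∧ p.2 ≤ (a : ℝ) ∧
    -(tan (π / n) * p.2) ≤ p.1 ∧ p.1 < -tan (π / n)} := by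
  ext p
  simp only [Vp2, mem_ofPred_eq]
  constructor
  · rintro ⟨hV, hy, hx⟩
    obtain ⟨hy1, hy2, hx'⟩ := (mem_Van_of_pos hy).mp hV
    exact ⟨hy1, hy2, (abs_le.mp hx').1, hx⟩
  · rintro ⟨hy1, hy2, hx', hx⟩
    have hy : 0 < p.2 := by linarith
    refine ⟨(mem_Van_of_pos hy).mpr ⟨hy1, hy2, abs_le.mpr ⟨hx', ?_⟩⟩, hy, hx⟩
    nlinarith

lemma Vp3_eq : Vp3 a n =
    {p | 1 < p.2 ∧ p.2 ≤ (a : ℝ) ∧ tan (π / n) < p.1 ∧ p.1 ≤ tan (π / n) * p.2} := by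
  ext p
  simp only [Vp3, mem_ofPred_eq]
  constructor
  · rintro ⟨hV, hy, hx⟩
    obtain ⟨hy1, hy2, hx'⟩ := (mem_Van_of_pos hy).mp hV
    exact ⟨hy1, hy2, hx, (abs_le.mp hx').2⟩
  · rintro ⟨hy1, hy2, hx, hx'⟩
    have hy : 0 < p.2 := by linarith
    refine ⟨(mem_Van_of_pos hy).mpr ⟨hy1, hy2, abs_le.mpr ⟨?_, hx'⟩⟩, hy, hx⟩
    nlinarith

lemma vpieces_eq_tile (hb : 0 ≤ tan (π / n)) : vpieces a n = tile (tan (π / n)) a := by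
  funext i
  ext ⟨x, y⟩
  fin_cases i <;>
    simp only [vpieces, tile, Vp1_eq hb, Vp2_eq, Vp3_eq, image_add_right, mem_preimage,
      mem_neg, Prod.mk_add_mk, Prod.neg_mk, mem_ofPred_eq, Fin.zero_eta, Fin.isValue,
      Matrix.cons_val_zero, Fin.reduceFinMk, Matrix.cons_val] <;>
    constructor <;> rintro ⟨h₁, h₂, h₃, h₄⟩ <;> refine ⟨?_, ?_, ?_, ?_⟩ <;> linarith

end

theorem statement_15_general (a n : ℕ) :
    (∀ i j : Fin 6, i ≠ j → volume (vpieces a n i ∩ vpieces a n j) = 0) ∧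
    volume ((⋃ i, vpieces a n i) ∆
      (Set.Icc (-(Real.tan (Real.pi / n) * (a : ℝ))) (Real.tan (Real.pi / n)) ×ˢ
        Set.Icc (-((a : ℝ) - 1)) ((a : ℝ) - 1))) = 0 := by
  rw [vpieces_eq_tile (tan_pi_div_natCast_nonneg n)]
  exact tile_ae_partition (tan_pi_div_natCast_nonneg n)

/-- Up to Lebesgue null sets, the six translated pieces
`V_{+,1}+(0,-1)`, `V_{-,1}+(0,1)`, `V_{+,2}+(0,-1)`, `V_{-,2}+(-b(a+1),a)`,
`V_{+,3}+(-b(a+1),-a)`, `V_{-,3}+(0,1)` are pairwise disjoint and their union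
is the rectangle `[-ba, b] × [-(a-1), a-1]`, where `b = tan(π/n)`. -/
theorem statement_15 (a n : ℕ) (ha : 2 ≤ a) (hn : Even n) (hn2 : 2 < n) :
    (∀ i j : Fin 6, i ≠ j → volume (vpieces a n i ∩ vpieces a n j) = 0) ∧
    volume ((⋃ i, vpieces a n i) ∆
      (Set.Icc (-(Real.tan (Real.pi / n) * (a : ℝ))) (Real.tan (Real.pi / n)) ×ˢ
        Set.Icc (-((a : ℝ) - 1)) ((a : ℝ) - 1))) = 0 :=
  statement_15_general a n
end
end
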